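/- (First alternative representation of the N_f = 2 index.) Let q, a, v be complex numbers with 0 < |q| < 1, |q| < |a| < 1, |q||v|² < |a|, v ≠ 0, and suppose that neither v² nor a/v² is an integer power of q. Then (qv², a, a/v²; q)_∞ / (v^{−2}, q/a, qv²/a; q)_∞ · [₂φ₁(qv²/a, q/a; qv²; q, a)]² = (qv²/a, a/v², q, q; q)_∞ / (v^{−2}, qv², a, q/a; q)_∞ · [₂φ₁(a, a; q; q, qv²/a)]². -/

import Mathlib

open scoped BigOperators

/-- The infinite q-Pochhammer symbol `(z;q)_∞ = ∏_{j=0}^∞ (1 - z q^j)`. -/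
noncomputable def qPochInf (z q : ℂ) : ℂ := ∏' j : ℕ, (1 - z * q ^ j)

/-- The q-Pochhammer symbol `(z;q)_n = (z;q)_∞ / (z q^n;q)_∞` for `n : ℤ`. -/
noncomputable def qPochInt (z q : ℂ) (n : ℤ) : ℂ :=
  qPochInf z q / qPochInf (z * q ^ n) q

/-- The basic hypergeometric series `₂φ₁(A,B;C;q,Z)`. -/
noncomputable def phi21 (A B C q Z : ℂ) : ℂ :=
  ∑' n : ℕ, (qPochInt A q n * qPochInt B q n) /
    (qPochInt q q n * qPochInt C q n) * Z ^ n


/-!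
By Heine's transformation
`₂φ₁(A,B;DB;q,Z) = (B,AZ;q)_∞/(DB,Z;q)_∞ · ₂φ₁(D,Z;AZ;q,B)`, applied with `A = q/a`,
`B = qv²/a`, `D = Z = a`, the series `₂φ₁(qv²/a, q/a; qv²; q, a)` is the multiple
`(qv²/a, q;q)_∞/(qv², a;q)_∞` of `₂φ₁(a, a; q; q, qv²/a)`; squaring it, the identity is a
rearrangement of infinite products. Heine's transformation comes from expanding
`(B;q)_n/(DB;q)_n` by the q-binomial theorem `∑ (α;q)_n/(q;q)_n z^n = (αz;q)_∞/(z;q)_∞` and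
swapping the two sums; the q-binomial theorem follows from the functional equation
`(1 - z) F(z) = (1 - αz) F(qz)` of its left side `F`, iterated and letting `qᵏz → 0`.
-/

open Filter Topology

noncomputable def qPochFin (z q : ℂ) (n : ℕ) : ℂ := ∏ j ∈ Finset.range n, (1 - z * q ^ j)

section QPochhammer

variable {q : ℂ}

lemma qPochFin_succ (z : ℂ) (n : ℕ) :
    qPochFin z q (n + 1) = qPochFin z q n * (1 - z * q ^ n) :=
  Finset.prod_range_succ _ _

lemma one_sub_mul_pow_ne_zero (hq : ‖q‖ < 1) {z : ℂ} (hz : ‖z‖ < 1) (j : ℕ) :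
    1 - z * q ^ j ≠ 0 := by
  have hlt : ‖z * q ^ j‖ < 1 := by
    rw [norm_mul, norm_pow]
    exact mul_lt_one_of_nonneg_of_lt_one_left (norm_nonneg z) hz
      (pow_le_one₀ (norm_nonneg q) hq.le)
  intro h
  rw [← sub_eq_zero.1 h, norm_one] at hlt
  exact hlt.false

lemma summable_norm_mul_pow (hq : ‖q‖ < 1) (z : ℂ) :
    Summable fun j : ℕ => ‖-(z * q ^ j)‖ := by
  simpa [norm_mul, norm_pow] using
    (summable_geometric_of_lt_one (norm_nonneg q) hq).mul_left ‖z‖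

lemma multipliable_one_sub_mul_pow (hq : ‖q‖ < 1) (z : ℂ) :
    Multipliable fun j : ℕ => 1 - z * q ^ j := by
  simpa [sub_eq_add_neg] using
    Complex.multipliable_one_add_of_summable (summable_norm_mul_pow hq z).of_norm

lemma qPochInf_ne_zero (hq : ‖q‖ < 1) {z : ℂ} (h : ∀ j : ℕ, 1 - z * q ^ j ≠ 0) :
    qPochInf z q ≠ 0 := by
  simpa [qPochInf, sub_eq_add_neg] using
    tprod_one_add_ne_zero_of_summable (by simpa [sub_eq_add_neg] using h)
      (summable_norm_mul_pow hq z)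

lemma qPochInf_ne_zero_of_norm_lt_one (hq : ‖q‖ < 1) {z : ℂ} (hz : ‖z‖ < 1) :
    qPochInf z q ≠ 0 :=
  qPochInf_ne_zero hq (one_sub_mul_pow_ne_zero hq hz)

lemma qPochInf_mul_ne_zero_of_ne_zpow (hq : ‖q‖ < 1) {w : ℂ} (hw : ∀ m : ℤ, w ≠ q ^ m) :
    qPochInf (q * w) q ≠ 0 := by
  refine qPochInf_ne_zero hq fun j h => hw (-(j + 1 : ℕ)) ?_
  rw [zpow_neg, zpow_natCast]
  exact eq_inv_of_mul_eq_one_left (by linear_combination -h)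

lemma qPochInf_inv_ne_zero_of_ne_zpow (hq : ‖q‖ < 1) {w : ℂ} (hw : ∀ m : ℤ, w ≠ q ^ m) :
    qPochInf w⁻¹ q ≠ 0 := by
  refine qPochInf_ne_zero hq fun j h => hw j ?_
  have hinv : w⁻¹ = (q ^ j)⁻¹ := eq_inv_of_mul_eq_one_left (by linear_combination -h)
  rw [zpow_natCast, ← inv_inv w, hinv, inv_inv]

lemma qPochInf_eq_qPochFin_mul (hq : ‖q‖ < 1) (z : ℂ) (n : ℕ) :
    qPochInf z q = qPochFin z q n * qPochInf (z * q ^ n) q := by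
  have hshift : ∀ j : ℕ, 1 - z * q ^ (j + n) = 1 - z * q ^ n * q ^ j := fun j => by ring
  rw [qPochInf, qPochInf, qPochFin, ← (Multipliable.prod_mul_tprod_nat_mul' (k := n) <|
    (multipliable_one_sub_mul_pow hq (z * q ^ n)).congr fun j => (hshift j).symm)]
  simp only [hshift]

lemma qPochFin_ne_zero (hq : ‖q‖ < 1) {z : ℂ} (hz : qPochInf z q ≠ 0) (n : ℕ) :
    qPochFin z q n ≠ 0 :=
  left_ne_zero_of_mul (qPochInf_eq_qPochFin_mul hq z n ▸ hz)

lemma qPochInf_mul_pow (hq : ‖q‖ < 1) {z : ℂ} (hz : qPochInf z q ≠ 0) (n : ℕ) :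
    qPochInf (z * q ^ n) q = qPochInf z q / qPochFin z q n := by
  rw [eq_div_iff (qPochFin_ne_zero hq hz n), mul_comm, ← qPochInf_eq_qPochFin_mul hq]

lemma qPochInt_natCast (hq : ‖q‖ < 1) {z : ℂ} (hz : qPochInf z q ≠ 0) (n : ℕ) :
    qPochInt z q n = qPochFin z q n := by
  rw [qPochInt, zpow_natCast, qPochInf_mul_pow hq hz, div_div_cancel₀ hz]

lemma phi21_eq_tsum (hq : ‖q‖ < 1) {A B C : ℂ} (hA : qPochInf A q ≠ 0)
    (hB : qPochInf B q ≠ 0) (hC : qPochInf C q ≠ 0) (Z : ℂ) :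
    phi21 A B C q Z = ∑' n : ℕ, qPochFin A q n * qPochFin B q n /
      (qPochFin q q n * qPochFin C q n) * Z ^ n := by
  simp only [phi21, qPochInt_natCast hq hA, qPochInt_natCast hq hB, qPochInt_natCast hq hC,
    qPochInt_natCast hq (qPochInf_ne_zero_of_norm_lt_one hq hq)]

lemma phi21_comm (A B C q Z : ℂ) : phi21 A B C q Z = phi21 B A C q Z := by
  simp only [phi21, mul_comm (qPochInt A q _)]

end QPochhammer

noncomputable def qBinomialCoeff (α q : ℂ) (n : ℕ) : ℂ := qPochFin α q n / qPochFin q q n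

noncomputable def qBinomialSeries (α q w : ℂ) : ℂ := ∑' n : ℕ, qBinomialCoeff α q n * w ^ n

section QBinomial

variable {q : ℂ}

@[simp]
lemma qBinomialCoeff_zero (α : ℂ) : qBinomialCoeff α q 0 = 1 := by
  simp [qBinomialCoeff, qPochFin]

lemma qBinomialCoeff_succ (hq : ‖q‖ < 1) (α : ℂ) (n : ℕ) :
    qBinomialCoeff α q (n + 1)
      = qBinomialCoeff α q n * ((1 - α * q ^ n) / (1 - q ^ (n + 1))) := by
  have hqq : qPochFin q q n ≠ 0 := qPochFin_ne_zero hq (qPochInf_ne_zero_of_norm_lt_one hq hq) n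
  have hqn : 1 - q * q ^ n ≠ 0 := one_sub_mul_pow_ne_zero hq hq n
  rw [qBinomialCoeff, qBinomialCoeff, qPochFin_succ, qPochFin_succ, pow_succ' q n]
  field_simp

lemma summable_norm_qBinomialCoeff_mul_pow (hq : ‖q‖ < 1) (α : ℂ) {z : ℂ} (hz : ‖z‖ < 1) :
    Summable fun n : ℕ => ‖qBinomialCoeff α q n * z ^ n‖ := by
  let ratio : ℕ → ℂ := fun n => (1 - α * q ^ n) / (1 - q ^ (n + 1)) * z
  have hratio : Tendsto ratio atTop (𝓝 z) := by
    have hpow : Tendsto (fun n : ℕ => q ^ n) atTop (𝓝 0) :=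
      tendsto_pow_atTop_nhds_zero_of_norm_lt_one hq
    have hnum : Tendsto (fun n : ℕ => 1 - α * q ^ n) atTop (𝓝 1) := by
      simpa using (hpow.const_mul α).const_sub 1
    have hden : Tendsto (fun n : ℕ => 1 - q ^ (n + 1)) atTop (𝓝 1) := by
      simpa [pow_succ'] using (hpow.const_mul q).const_sub 1
    simpa using (hnum.div hden one_ne_zero).mul_const z
  refine summable_of_ratio_norm_eventually_le (r := (1 + ‖z‖) / 2) (by linarith) ?_
  filter_upwards [hratio.norm.eventually_le_const (by linarith : ‖z‖ < (1 + ‖z‖) / 2)] with n hn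
  have hstep : qBinomialCoeff α q (n + 1) * z ^ (n + 1)
      = qBinomialCoeff α q n * z ^ n * ratio n := by
    rw [qBinomialCoeff_succ hq, pow_succ]
    ring
  rw [norm_norm, norm_norm, hstep, norm_mul, mul_comm]
  exact mul_le_mul_of_nonneg_right hn (norm_nonneg _)

lemma summable_qBinomialCoeff_mul_pow (hq : ‖q‖ < 1) (α : ℂ) {z : ℂ} (hz : ‖z‖ < 1) :
    Summable fun n : ℕ => qBinomialCoeff α q n * z ^ n :=
  (summable_norm_qBinomialCoeff_mul_pow hq α hz).of_norm

lemma norm_pow_mul_lt_one (hq : ‖q‖ < 1) {z : ℂ} (hz : ‖z‖ < 1) (k : ℕ) : ‖q ^ k * z‖ < 1 := by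
  rw [norm_mul, norm_pow]
  exact mul_lt_one_of_nonneg_of_lt_one_right (pow_le_one₀ (norm_nonneg q) hq.le)
    (norm_nonneg z) hz

/-- With `dₙ = cₙ (1 - qⁿ) wⁿ`, the coefficient recursion makes `F(w) - F(qw) = ∑ dₙ` and
`w (F(w) - α F(qw)) = ∑ dₙ₊₁`, which agree since `d₀ = 0`. -/
lemma one_sub_mul_qBinomialSeries (hq : ‖q‖ < 1) (α : ℂ) {w : ℂ} (hw : ‖w‖ < 1) :
    (1 - w) * qBinomialSeries α q w = (1 - α * w) * qBinomialSeries α q (q * w) := by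
  set c := qBinomialCoeff α q
  set d : ℕ → ℂ := fun n => c n * (1 - q ^ n) * w ^ n
  have hsum := summable_qBinomialCoeff_mul_pow hq α hw
  have hqw : ‖q * w‖ < 1 := by simpa using norm_pow_mul_lt_one hq hw 1
  have hsum_q := summable_qBinomialCoeff_mul_pow hq α hqw
  have hdiff : qBinomialSeries α q w - qBinomialSeries α q (q * w) = ∑' n, d n := by
    rw [qBinomialSeries, qBinomialSeries, ← hsum.tsum_sub hsum_q]
    exact tsum_congr fun n => by simp only [d, mul_pow]; ring
  have hd : Summable d := (hsum.sub hsum_q).congr fun n => by simp only [d, mul_pow]; ring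
  have hshift : w * (qBinomialSeries α q w - α * qBinomialSeries α q (q * w))
      = ∑' n, d (n + 1) := by
    rw [qBinomialSeries, qBinomialSeries, ← tsum_mul_left, ← hsum.tsum_sub (hsum_q.mul_left α),
      ← tsum_mul_left]
    refine tsum_congr fun n => ?_
    have hqn : 1 - q ^ (n + 1) ≠ 0 := by
      simpa [pow_succ'] using one_sub_mul_pow_ne_zero hq hq n
    simp only [d, c, qBinomialCoeff_succ hq, mul_pow]
    field_simp
    ring
  have hd0 : d 0 = 0 := by simp [d]
  rw [hd.tsum_eq_zero_add, hd0, zero_add] at hdiff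
  linear_combination hdiff - hshift

lemma qPochFin_mul_qBinomialSeries (hq : ‖q‖ < 1) (α : ℂ) {z : ℂ} (hz : ‖z‖ < 1) (k : ℕ) :
    qPochFin z q k * qBinomialSeries α q z
      = qPochFin (α * z) q k * qBinomialSeries α q (q ^ k * z) := by
  induction k with
  | zero => simp [qPochFin]
  | succ k ih =>
    have hfun := one_sub_mul_qBinomialSeries hq α (norm_pow_mul_lt_one hq hz k)
    rw [qPochFin_succ, qPochFin_succ, mul_right_comm, ih, pow_succ', mul_assoc q]
    linear_combination qPochFin (α * z) q k * hfun

lemma tendsto_qBinomialSeries_pow_mul (hq : ‖q‖ < 1) (α : ℂ) {z : ℂ} (hz : ‖z‖ < 1) :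
    Tendsto (fun k : ℕ => qBinomialSeries α q (q ^ k * z)) atTop (𝓝 1) := by
  have hlim : Tendsto (fun k : ℕ => q ^ k * z) atTop (𝓝 0) := by
    simpa using (tendsto_pow_atTop_nhds_zero_of_norm_lt_one hq).mul_const z
  have hone : ∑' n : ℕ, qBinomialCoeff α q n * (0 : ℂ) ^ n = 1 := by
    rw [tsum_eq_single 0 fun n hn => by simp [hn]]
    simp
  rw [← hone]
  refine tendsto_tsum_of_dominated_convergence (summable_norm_qBinomialCoeff_mul_pow hq α hz)
    (fun n => (hlim.pow n).const_mul _) (Eventually.of_forall fun k n => ?_)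
  rw [norm_mul, norm_mul, mul_pow, norm_mul, norm_pow, norm_pow, norm_pow]
  gcongr
  exact mul_le_of_le_one_left (by positivity) (pow_le_one₀ (by positivity)
    (pow_le_one₀ (norm_nonneg q) hq.le))

theorem qBinomialSeries_eq (hq : ‖q‖ < 1) (α : ℂ) {z : ℂ} (hz : ‖z‖ < 1) :
    qBinomialSeries α q z = qPochInf (α * z) q / qPochInf z q := by
  have hprod : ∀ x : ℂ, Tendsto (qPochFin x q) atTop (𝓝 (qPochInf x q)) := fun x =>
    (multipliable_one_sub_mul_pow hq x).hasProd.tendsto_prod_nat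
  have hlhs := (hprod z).mul_const (qBinomialSeries α q z)
  have hrhs := (hprod (α * z)).mul (tendsto_qBinomialSeries_pow_mul hq α hz)
  rw [mul_one] at hrhs
  rw [eq_div_iff (qPochInf_ne_zero_of_norm_lt_one hq hz), mul_comm,
    tendsto_nhds_unique (hlhs.congr (qPochFin_mul_qBinomialSeries hq α hz)) hrhs]

lemma qBinomialSeries_mul_pow (hq : ‖q‖ < 1) (α : ℂ) {z : ℂ} (hz : ‖z‖ < 1)
    (hαz : qPochInf (α * z) q ≠ 0) (n : ℕ) :
    qBinomialSeries α q (z * q ^ n)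
      = qPochInf (α * z) q * qPochFin z q n / (qPochInf z q * qPochFin (α * z) q n) := by
  have hz' : qPochInf z q ≠ 0 := qPochInf_ne_zero_of_norm_lt_one hq hz
  rw [qBinomialSeries_eq hq α (by simpa [mul_comm] using norm_pow_mul_lt_one hq hz n),
    ← mul_assoc, qPochInf_mul_pow hq hαz, qPochInf_mul_pow hq hz']
  have := qPochFin_ne_zero hq hz' n
  have := qPochFin_ne_zero hq hαz n
  field_simp

end QBinomial

/-- The double series `∑_{n,m} c^A_n Z^n c^D_m B^m q^{nm}` whose two iterated sums are the two
sides of Heine's transformation. -/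
noncomputable def heineTerm (A D B Z q : ℂ) (n m : ℕ) : ℂ :=
  qBinomialCoeff A q n * Z ^ n * (qBinomialCoeff D q m * B ^ m) * q ^ (n * m)

section Heine

variable {q A D B Z : ℂ}

lemma summable_heineTerm (hq : ‖q‖ < 1) (hZ : ‖Z‖ < 1) (hB : ‖B‖ < 1) :
    Summable (Function.uncurry (heineTerm A D B Z q)) := by
  refine Summable.of_norm_bounded ((summable_norm_qBinomialCoeff_mul_pow hq A hZ).mul_of_nonneg
    (summable_norm_qBinomialCoeff_mul_pow hq D hB) (fun _ => norm_nonneg _)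
    (fun _ => norm_nonneg _)) fun ⟨n, m⟩ => ?_
  rw [Function.uncurry_apply_pair, heineTerm, norm_mul, norm_mul (_ * _)]
  exact mul_le_of_le_one_right (by positivity) (by
    rw [norm_pow]; exact pow_le_one₀ (norm_nonneg q) hq.le)

lemma tsum_heineTerm_right (hq : ‖q‖ < 1) (hB : ‖B‖ < 1) (hDB : qPochInf (D * B) q ≠ 0)
    (n : ℕ) :
    ∑' m, heineTerm A D B Z q n m = qPochInf (D * B) q / qPochInf B q *
      (qPochFin A q n * qPochFin B q n / (qPochFin q q n * qPochFin (D * B) q n) * Z ^ n) := by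
  have hseries := qBinomialSeries_mul_pow hq D hB hDB n
  rw [qBinomialSeries] at hseries
  have hterm : ∀ m, heineTerm A D B Z q n m
      = qBinomialCoeff A q n * Z ^ n * (qBinomialCoeff D q m * (B * q ^ n) ^ m) := fun m => by
    rw [heineTerm, mul_pow, ← pow_mul, mul_comm n m]
    ring
  rw [tsum_congr hterm, tsum_mul_left, hseries, qBinomialCoeff]
  have := qPochFin_ne_zero hq hDB n
  have := qPochFin_ne_zero hq (qPochInf_ne_zero_of_norm_lt_one hq hq) n
  have := qPochInf_ne_zero_of_norm_lt_one hq hB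
  field_simp

lemma tsum_heineTerm_left (hq : ‖q‖ < 1) (hZ : ‖Z‖ < 1) (hAZ : qPochInf (A * Z) q ≠ 0)
    (m : ℕ) :
    ∑' n, heineTerm A D B Z q n m = qPochInf (A * Z) q / qPochInf Z q *
      (qPochFin D q m * qPochFin Z q m / (qPochFin q q m * qPochFin (A * Z) q m) * B ^ m) := by
  have hseries := qBinomialSeries_mul_pow hq A hZ hAZ m
  rw [qBinomialSeries] at hseries
  have hterm : ∀ n, heineTerm A D B Z q n m
      = qBinomialCoeff D q m * B ^ m * (qBinomialCoeff A q n * (Z * q ^ m) ^ n) := fun n => by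
    rw [heineTerm, mul_pow, ← pow_mul]
    ring
  rw [tsum_congr hterm, tsum_mul_left, hseries, qBinomialCoeff]
  have := qPochFin_ne_zero hq hAZ m
  have := qPochFin_ne_zero hq (qPochInf_ne_zero_of_norm_lt_one hq hq) m
  have := qPochInf_ne_zero_of_norm_lt_one hq hZ
  field_simp

theorem phi21_heine (hq : ‖q‖ < 1) {C : ℂ} (hZ : ‖Z‖ < 1) (hB : ‖B‖ < 1)
    (hA : qPochInf A q ≠ 0) (hD : qPochInf D q ≠ 0) (hAZ : qPochInf (A * Z) q ≠ 0)
    (hDB : D * B = C) (hC : qPochInf C q ≠ 0) :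
    phi21 A B C q Z = qPochInf B q * qPochInf (A * Z) q / (qPochInf C q * qPochInf Z q) *
      phi21 D Z (A * Z) q B := by
  subst hDB
  have hB' := qPochInf_ne_zero_of_norm_lt_one hq hB
  have hZ' := qPochInf_ne_zero_of_norm_lt_one hq hZ
  calc phi21 A B (D * B) q Z
      = qPochInf B q / qPochInf (D * B) q * ∑' n, ∑' m, heineTerm A D B Z q n m := by
        rw [phi21_eq_tsum hq hA hB' hC, ← tsum_mul_left]
        refine tsum_congr fun n => ?_
        rw [tsum_heineTerm_right hq hB hC, ← mul_assoc, div_mul_div_cancel₀ hC, div_self hB',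
          one_mul]
    _ = qPochInf B q / qPochInf (D * B) q * ∑' m, ∑' n, heineTerm A D B Z q n m := by
        rw [(summable_heineTerm hq hZ hB).tsum_comm]
    _ = _ := by
        rw [phi21_eq_tsum hq hD hZ' hAZ, tsum_congr (tsum_heineTerm_left hq hZ hAZ), tsum_mul_left]
        ring

end Heine

theorem first_alternative_representation_Nf2_general (q a v : ℂ)
    (hq1 : ‖q‖ < 1)
    (hqa : ‖q‖ < ‖a‖) (ha : ‖a‖ < 1)
    (hqv : ‖q‖ * ‖v‖ ^ 2 < ‖a‖)
    (hv2 : ∀ m : ℤ, v ^ 2 ≠ q ^ m) :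
    (qPochInf (q * v ^ 2) q * qPochInf a q * qPochInf (a / v ^ 2) q) /
      (qPochInf (v ^ (-2 : ℤ)) q * qPochInf (q / a) q * qPochInf (q * v ^ 2 / a) q) *
      phi21 (q * v ^ 2 / a) (q / a) (q * v ^ 2) q a ^ 2
    = (qPochInf (q * v ^ 2 / a) q * qPochInf (a / v ^ 2) q * qPochInf q q * qPochInf q q) /
      (qPochInf (v ^ (-2 : ℤ)) q * qPochInf (q * v ^ 2) q * qPochInf a q * qPochInf (q / a) q) *
      phi21 a a q q (q * v ^ 2 / a) ^ 2 := by
  have ha0 : a ≠ 0 := norm_pos_iff.1 ((norm_nonneg q).trans_lt hqa)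
  have hqa1 : ‖q / a‖ < 1 := by
    rwa [norm_div, div_lt_one (norm_pos_iff.2 ha0)]
  have hqva1 : ‖q * v ^ 2 / a‖ < 1 := by
    rwa [norm_div, div_lt_one (norm_pos_iff.2 ha0), norm_mul, norm_pow]
  have hqa' := qPochInf_ne_zero_of_norm_lt_one hq1 hqa1
  have hqva' := qPochInf_ne_zero_of_norm_lt_one hq1 hqva1
  have ha' := qPochInf_ne_zero_of_norm_lt_one hq1 ha
  have hqv2 : qPochInf (q * v ^ 2) q ≠ 0 := qPochInf_mul_ne_zero_of_ne_zpow hq1 hv2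
  have hvinv : qPochInf (v ^ (-2 : ℤ)) q ≠ 0 := by
    rw [zpow_neg, zpow_ofNat]
    exact qPochInf_inv_ne_zero_of_ne_zpow hq1 hv2
  have heine := phi21_heine hq1 ha hqva1 hqa' ha'
    (by rw [div_mul_cancel₀ q ha0]; exact qPochInf_ne_zero_of_norm_lt_one hq1 hq1)
    (by field_simp : a * (q * v ^ 2 / a) = q * v ^ 2) hqv2
  rw [div_mul_cancel₀ q ha0] at heine
  rw [phi21_comm, heine]
  field_simp

theorem first_alternative_representation_Nf2 (q a v : ℂ)
    (hq0 : 0 < ‖q‖) (hq1 : ‖q‖ < 1)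
    (hqa : ‖q‖ < ‖a‖) (ha : ‖a‖ < 1)
    (hqv : ‖q‖ * ‖v‖ ^ 2 < ‖a‖)
    (hv : v ≠ 0)
    (hv2 : ∀ m : ℤ, v ^ 2 ≠ q ^ m)
    (hav2 : ∀ m : ℤ, a / v ^ 2 ≠ q ^ m) :
    (qPochInf (q * v ^ 2) q * qPochInf a q * qPochInf (a / v ^ 2) q) /
      (qPochInf (v ^ (-2 : ℤ)) q * qPochInf (q / a) q * qPochInf (q * v ^ 2 / a) q) *
      phi21 (q * v ^ 2 / a) (q / a) (q * v ^ 2) q a ^ 2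
    = (qPochInf (q * v ^ 2 / a) q * qPochInf (a / v ^ 2) q * qPochInf q q * qPochInf q q) /
      (qPochInf (v ^ (-2 : ℤ)) q * qPochInf (q * v ^ 2) q * qPochInf a q * qPochInf (q / a) q) *
      phi21 a a q q (q * v ^ 2 / a) ^ 2 :=
  first_alternative_representation_Nf2_general q a v hq1 hqa ha hqv hv2
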